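/- Let S be the n×n real matrix with S_{ii} = −μ_i for all i, S_{i,i+1} = p_i μ_i for i = 1,...,n−1, and all other entries 0, and set ν_i := μ_i(1−p_i) (with p_n = 0). Assume ν_i is strictly decreasing in i. Then for each i ∈ {1,...,n} the function t ↦ ( ∑_{j=i}^n (exp(tS))_{1,j} ) / ( ∑_{j=1}^n (exp(tS))_{1,j} ) is nondecreasing on [0,∞). (Probabilistically: P[τ_t ≥ i | Y > t] is nondecreasing in t, where τ_t is the service phase at time t of a Coxian job Y started in phase 1 at time 0.) -/

import Mathlib

/-!
Let `x(t)` be the first row of `exp(tS)`, so `x' = x S`. Since `S` has nonnegative off-diagonal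
entries, `x ≥ 0`, and its diagonal entries make `∑ x > 0`. For `I = {i, …, n}` the rows of `S`
indexed by `I` vanish outside `I`, so `(∑_I x)' = -∑_I x_k ν_k + (nonnegative inflow from phases
below `i`)`, while `(∑ x)' = -∑ x_k ν_k`. Because `ν` is decreasing, the phases in `I` lose mass
more slowly than the others, which makes the derivative of `∑_I x / ∑ x` nonnegative.
-/

open Finset NormedSpace

theorem Matrix.sum_mul_apply_eq_sum_mul_sum {l m n R : Type*} [Fintype m]
    [NonUnitalNonAssocSemiring R] (A : Matrix l m R) (B : Matrix m n R) (J : Finset n) (a : l) :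
    ∑ b ∈ J, (A * B) a b = ∑ k, A a k * ∑ b ∈ J, B k b := by
  simp_rw [Matrix.mul_apply, mul_sum]
  exact sum_comm

theorem sum_mul_le_sum_mul_of_le_on_compl {ι : Type*} [Fintype ι] [DecidableEq ι] (I : Finset ι)
    {x C D : ι → ℝ} (hx : ∀ k, 0 ≤ x k) (hCD : ∀ k ∈ I, C k = D k) (hC : ∀ k ∉ I, 0 ≤ C k)
    (hD : ∀ j ∉ I, ∀ k ∈ I, D j ≤ D k) :
    (∑ k ∈ I, x k) * ∑ k, x k * D k ≤ (∑ k, x k * C k) * ∑ k, x k := by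
  rw [← sum_add_sum_compl I x, ← sum_add_sum_compl I fun k => x k * D k,
    ← sum_add_sum_compl I fun k => x k * C k,
    sum_congr rfl fun k hk => congrArg (x k * ·) (hCD k hk)]
  have hcross : (∑ k ∈ I, x k) * ∑ j ∈ Iᶜ, x j * D j ≤ (∑ k ∈ I, x k * D k) * ∑ j ∈ Iᶜ, x j := by
    rw [sum_mul_sum, sum_mul_sum]
    refine sum_le_sum fun k hk => sum_le_sum fun j hj => ?_
    have := mul_le_mul_of_nonneg_left (hD j (mem_compl.mp hj) k hk) (mul_nonneg (hx k) (hx j))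
    linarith
  have hP : 0 ≤ ∑ k ∈ I, x k := sum_nonneg fun k _ => hx k
  have hQ : 0 ≤ ∑ k ∈ Iᶜ, x k := sum_nonneg fun k _ => hx k
  have hU : 0 ≤ ∑ k ∈ Iᶜ, x k * C k :=
    sum_nonneg fun k hk => mul_nonneg (hx k) (hC k (mem_compl.mp hk))
  nlinarith [mul_nonneg hU (add_nonneg hP hQ)]

theorem monotoneOn_div_of_hasDerivAt {D : Set ℝ} (hD : Convex ℝ D) {f g f' g' : ℝ → ℝ}
    (hf : ∀ x, HasDerivAt f (f' x) x) (hg : ∀ x, HasDerivAt g (g' x) x)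
    (hg0 : ∀ x ∈ D, g x ≠ 0) (h : ∀ x ∈ interior D, f x * g' x ≤ f' x * g x) :
    MonotoneOn (fun x => f x / g x) D :=
  monotoneOn_of_hasDerivWithinAt_nonneg hD
    (fun x hx => ((hf x).div (hg x) (hg0 x hx)).continuousAt.continuousWithinAt)
    (fun x hx => ((hf x).div (hg x) (hg0 x (interior_subset hx))).hasDerivWithinAt)
    fun x hx => div_nonneg (sub_nonneg.mpr (h x hx)) (sq_nonneg _)

namespace Matrix

variable {ι : Type*} [Fintype ι] [DecidableEq ι]

section

attribute [local instance] Matrix.linftyOpNormedRing Matrix.linftyOpNormedAlgebra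

theorem one_apply_le_exp_apply_of_nonneg {N : Matrix ι ι ℝ} (hN : ∀ i j, 0 ≤ N i j) (i j : ι) :
    (1 : Matrix ι ι ℝ) i j ≤ exp N i j := by
  have hpow (k : ℕ) : ∀ i j, 0 ≤ (N ^ k) i j := by
    induction k with
    | zero => intro i j; rw [pow_zero, one_apply]; positivity
    | succ k ih =>
      intro i j
      rw [pow_succ, mul_apply]
      exact sum_nonneg fun c _ => mul_nonneg (ih _ _) (hN _ _)
  have hsum := Pi.hasSum.mp (Pi.hasSum.mp (exp_series_hasSum_exp' (𝕂 := ℝ) N) i) j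
  have := le_hasSum hsum 0 fun k _ => by simpa using mul_nonneg (by positivity) (hpow k i j)
  rwa [Nat.factorial_zero, Nat.cast_one, inv_one, one_smul, pow_zero] at this

theorem hasDerivAt_exp_smul_apply (S : Matrix ι ι ℝ) (a b : ι) (t : ℝ) :
    HasDerivAt (fun u : ℝ => exp (u • S) a b) ((exp (t • S) * S) a b) t :=
  (entryLinearMap ℝ ℝ a b).toContinuousLinearMap.hasFDerivAt.comp_hasDerivAt t
    (hasDerivAt_exp_smul_const S t)

end

theorem exp_eq_smul_exp_add_smul_one (M : Matrix ι ι ℝ) (c : ℝ) :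
    exp M = Real.exp (-c) • exp (M + c • 1) := by
  have hM : M = (-c) • (1 : Matrix ι ι ℝ) + (M + c • 1) := by module
  conv_lhs => rw [hM]
  rw [exp_add_of_commute _ _ ((Commute.one_left _).smul_left _), smul_one_eq_diagonal,
    exp_diagonal, Pi.exp_def, ← smul_eq_diagonal_mul, Real.exp_eq_exp_ℝ]

/-- Shifting by `c = ∑ |M k k|` makes `M + c • 1` entrywise nonnegative. -/
theorem exists_pos_smul_one_le_exp {M : Matrix ι ι ℝ} (hM : ∀ i j, i ≠ j → 0 ≤ M i j) :
    ∃ r > 0, ∀ i j, r * (1 : Matrix ι ι ℝ) i j ≤ exp M i j := by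
  set c := ∑ k, |M k k|
  have hN (i j : ι) : 0 ≤ (M + c • 1) i j := by
    rcases eq_or_ne i j with rfl | hij
    · have := single_le_sum (fun k _ => abs_nonneg (M k k)) (mem_univ i)
      simp only [add_apply, smul_apply, one_apply_eq, smul_eq_mul, mul_one]
      linarith [neg_abs_le (M i i)]
    · simpa [one_apply_ne hij] using hM i j hij
  refine ⟨Real.exp (-c), Real.exp_pos _, fun i j => ?_⟩
  rw [exp_eq_smul_exp_add_smul_one M c, smul_apply, smul_eq_mul]
  exact mul_le_mul_of_nonneg_left (one_apply_le_exp_apply_of_nonneg hN i j) (Real.exp_pos _).le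

theorem exp_apply_nonneg_of_offDiag_nonneg {M : Matrix ι ι ℝ} (hM : ∀ i j, i ≠ j → 0 ≤ M i j)
    (i j : ι) : 0 ≤ exp M i j := by
  obtain ⟨r, hr, hle⟩ := exists_pos_smul_one_le_exp hM
  exact (mul_nonneg hr.le (by rw [one_apply]; positivity)).trans (hle i j)

theorem exp_apply_self_pos_of_offDiag_nonneg {M : Matrix ι ι ℝ} (hM : ∀ i j, i ≠ j → 0 ≤ M i j)
    (i : ι) : 0 < exp M i i := by
  obtain ⟨r, hr, hle⟩ := exists_pos_smul_one_le_exp hM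
  have := hle i i
  rw [one_apply_eq, mul_one] at this
  exact hr.trans_le this

theorem monotoneOn_sum_exp_smul_apply_div {S : Matrix ι ι ℝ} (hS : ∀ i j, i ≠ j → 0 ≤ S i j)
    {I : Finset ι} (hI : ∀ k ∈ I, ∀ b ∉ I, S k b = 0)
    (hrow : ∀ j ∉ I, ∀ k ∈ I, ∑ b, S j b ≤ ∑ b, S k b) (a : ι) :
    MonotoneOn (fun u : ℝ => (∑ b ∈ I, exp (u • S) a b) / ∑ b, exp (u • S) a b) (Set.Ici 0) := by
  have huS {u : ℝ} (hu : 0 ≤ u) : ∀ i j, i ≠ j → 0 ≤ (u • S) i j := fun i j hij =>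
    mul_nonneg hu (hS i j hij)
  have hsum_pos {u : ℝ} (hu : 0 ≤ u) : 0 < ∑ b, exp (u • S) a b :=
    (exp_apply_self_pos_of_offDiag_nonneg (huS hu) a).trans_le <|
      single_le_sum (fun k _ => exp_apply_nonneg_of_offDiag_nonneg (huS hu) a k) (mem_univ a)
  refine monotoneOn_div_of_hasDerivAt (convex_Ici 0)
    (fun u => HasDerivAt.fun_sum fun b _ => hasDerivAt_exp_smul_apply S a b u)
    (fun u => HasDerivAt.fun_sum fun b _ => hasDerivAt_exp_smul_apply S a b u)
    (fun u hu => (hsum_pos hu).ne') fun u hu => ?_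
  rw [interior_Ici, Set.mem_Ioi] at hu
  rw [sum_mul_apply_eq_sum_mul_sum, sum_mul_apply_eq_sum_mul_sum]
  refine sum_mul_le_sum_mul_of_le_on_compl I
    (exp_apply_nonneg_of_offDiag_nonneg (huS hu.le) a) (fun k hk => ?_) (fun k hk => ?_) hrow
  · rw [← sum_add_sum_compl I, sum_eq_zero fun b hb => hI k hk b (mem_compl.mp hb), add_zero]
  · exact sum_nonneg fun b hb => hS k b (ne_of_mem_of_not_mem hb hk).symm

end Matrix

def coxianGenerator {n : ℕ} (μ p : Fin n → ℝ) : Matrix (Fin n) (Fin n) ℝ :=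
  Matrix.of fun i j => if j = i then -μ i else if (j : ℕ) = (i : ℕ) + 1 then p i * μ i else 0

section Coxian

variable {n : ℕ} {μ p : Fin n → ℝ}

theorem coxianGenerator_apply_nonneg_of_ne (hμ : ∀ i, 0 ≤ μ i)
    (hp : ∀ i : Fin n, (i : ℕ) + 1 < n → 0 ≤ p i) (i j : Fin n) (hij : i ≠ j) :
    0 ≤ coxianGenerator μ p i j := by
  simp only [coxianGenerator, Matrix.of_apply, if_neg hij.symm]
  split_ifs with h
  · exact mul_nonneg (hp i (h ▸ j.isLt)) (hμ i)
  · exact le_rfl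

theorem coxianGenerator_apply_of_lt {i j : Fin n} (hji : j < i) : coxianGenerator μ p i j = 0 := by
  have : (j : ℕ) ≠ i + 1 := by omega
  simp [coxianGenerator, hji.ne, this]

theorem sum_coxianGenerator_apply (hpn : ∀ i : Fin n, (i : ℕ) + 1 = n → p i = 0) (i : Fin n) :
    ∑ j, coxianGenerator μ p i j = -(μ i * (1 - p i)) := by
  by_cases hi : (i : ℕ) + 1 < n
  · rw [Fintype.sum_eq_add i ⟨i + 1, hi⟩ (by simp [Fin.ext_iff]) fun j hj => ?_]
    · simp only [coxianGenerator, Fin.ext_iff, Matrix.of_apply, ↓reduceIte, Nat.add_eq_left,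
        one_ne_zero]
      ring
    · have : (j : ℕ) ≠ i + 1 := fun h => hj.2 (Fin.ext h)
      simp [coxianGenerator, hj.1, this]
  · rw [Fintype.sum_eq_single i fun j hj => ?_, hpn i (by omega)]
    · simp [coxianGenerator]
    · have : (j : ℕ) ≠ i + 1 := by omega
      simp [coxianGenerator, hj, this]

end Coxian

/-- For a Coxian distribution in class `C₀` (completion rates `ν i = μ i (1 − p i)`
strictly decreasing in the phase), the conditional probability that the service phase
is at least `i`, given that the job is still in service at time `t`, is nondecreasing
in `t`: for each phase `i`, `t ↦ (∑_{j≥i} exp(tS)_{1,j}) / (∑_j exp(tS)_{1,j})` is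
nondecreasing on `[0,∞)`. -/
theorem stmt7 (n : ℕ) (hn : 1 ≤ n) (μ p : Fin n → ℝ)
    (hμ : ∀ i, 0 < μ i)
    (hp : ∀ i : Fin n, (i : ℕ) + 1 < n → 0 < p i ∧ p i < 1)
    (hpn : ∀ i : Fin n, (i : ℕ) + 1 = n → p i = 0)
    (S : Matrix (Fin n) (Fin n) ℝ)
    (hS : S = Matrix.of fun i j : Fin n =>
      if j = i then -μ i else if (j : ℕ) = (i : ℕ) + 1 then p i * μ i else 0)
    (hν : ∀ i j : Fin n, i < j → μ j * (1 - p j) < μ i * (1 - p i)) :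
    ∀ i : Fin n, ∀ s t : ℝ, 0 ≤ s → s ≤ t →
      (∑ j ∈ Finset.Ici i, NormedSpace.exp (s • S) ⟨0, hn⟩ j) /
          (∑ j : Fin n, NormedSpace.exp (s • S) ⟨0, hn⟩ j) ≤
        (∑ j ∈ Finset.Ici i, NormedSpace.exp (t • S) ⟨0, hn⟩ j) /
          (∑ j : Fin n, NormedSpace.exp (t • S) ⟨0, hn⟩ j) := by
  obtain rfl : S = coxianGenerator μ p := hS
  intro i s t hs hst
  have hlt {j k : Fin n} (hj : j ∉ Ici i) (hk : k ∈ Ici i) : j < k :=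
    (not_le.mp (mem_Ici.not.mp hj)).trans_le (mem_Ici.mp hk)
  have hrow (j : Fin n) (hj : j ∉ Ici i) (k : Fin n) (hk : k ∈ Ici i) :
      ∑ b, coxianGenerator μ p j b ≤ ∑ b, coxianGenerator μ p k b := by
    rw [sum_coxianGenerator_apply hpn, sum_coxianGenerator_apply hpn]
    exact neg_le_neg (hν j k (hlt hj hk)).le
  exact Matrix.monotoneOn_sum_exp_smul_apply_div
    (coxianGenerator_apply_nonneg_of_ne (fun k => (hμ k).le) fun k hk => (hp k hk).1.le)
    (fun k hk j hj => coxianGenerator_apply_of_lt (hlt hj hk)) hrow ⟨0, hn⟩ hs (hs.trans hst) hst
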